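/- Let A be a real n×d matrix and f(x) := ⟨exp(Ax), 1_n⟩^{-1} · exp(Ax). Then for each i, j ∈ [d], the second partial derivative of f satisfies ∂²f(x)/∂x_i ∂x_j = 2⟨f(x), A_{*,i}⟩⟨f(x), A_{*,j}⟩ f(x) − ⟨f(x), A_{*,i} ∘ A_{*,j}⟩ f(x) − ⟨f(x), A_{*,i}⟩ (f(x) ∘ A_{*,j}) − ⟨f(x), A_{*,j}⟩ (f(x) ∘ A_{*,i}) + A_{*,i} ∘ f(x) ∘ A_{*,j}. -/

import Mathlib

open Matrix

/-- The Euclidean inner product on ℝ^n. -/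
noncomputable def dotp {n : ℕ} (u v : Fin n → ℝ) : ℝ := ∑ i, u i * v i

/-- The softmax function f(x) = ⟨exp(Ax), 1_n⟩⁻¹ · exp(Ax). -/
noncomputable def softmaxFn {n d : ℕ} (A : Matrix (Fin n) (Fin d) ℝ) (x : Fin d → ℝ) :
    Fin n → ℝ :=
  (∑ i, Real.exp (A.mulVec x i))⁻¹ • fun i => Real.exp (A.mulVec x i)

/-!
The Jacobian of `softmax` at `z` is `diag p - p pᵀ` with `p = softmax z`, so
`∂_j f(x) = (diag f(x) - f(x) f(x)ᵀ) A_{*,j}`. This is quadratic in `f(x)`; differentiating it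
once more by the product rule, with `∂_i f(x) = (diag f(x) - f(x) f(x)ᵀ) A_{*,i}` as the
derivative of `f`, and expanding gives the five terms.
-/

section Softmax

variable {ι : Type*} [Fintype ι]

noncomputable def softmax (z : ι → ℝ) : ι → ℝ :=
  (∑ k, Real.exp (z k))⁻¹ • fun k => Real.exp (z k)

theorem sum_exp_pos [Nonempty ι] (z : ι → ℝ) : 0 < ∑ k, Real.exp (z k) :=
  Finset.sum_pos (fun _ _ => Real.exp_pos _) Finset.univ_nonempty

-- `(diag p - p pᵀ) a`: at `p = softmax z` this is the Jacobian of `softmax` applied to `a`.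
def softmaxJacobian (p a : ι → ℝ) : ι → ℝ := p * a - (p ⬝ᵥ a) • p

theorem softmaxJacobian_dotProduct (p a b : ι → ℝ) :
    softmaxJacobian p b ⬝ᵥ a = p ⬝ᵥ (b * a) - (p ⬝ᵥ b) * (p ⬝ᵥ a) := by
  rw [softmaxJacobian, sub_dotProduct, smul_dotProduct, smul_eq_mul]
  simp only [dotProduct, Pi.mul_apply, mul_assoc]

theorem differentiable_softmaxJacobian (a : ι → ℝ) :
    Differentiable ℝ fun p => softmaxJacobian p a := by
  unfold softmaxJacobian dotProduct
  fun_prop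

theorem fderiv_softmaxJacobian_apply (p a h : ι → ℝ) :
    fderiv ℝ (fun q => softmaxJacobian q a) p h = h * a - (h ⬝ᵥ a) • p - (p ⬝ᵥ a) • h := by
  have hdot : HasFDerivAt (𝕜 := ℝ) (fun q : ι → ℝ => q ⬝ᵥ a) _ p :=
    HasFDerivAt.fun_sum (u := Finset.univ) fun k _ => (hasFDerivAt_apply k p).mul_const (a k)
  have h' : HasFDerivAt (fun q => softmaxJacobian q a) _ p :=
    ((hasFDerivAt_id p).mul_const a).sub (hdot.smul (hasFDerivAt_id p))
  rw [h'.fderiv]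
  ext k
  simp only [dotProduct, _root_.sub_apply, _root_.add_apply,
    _root_.smul_apply, ContinuousLinearMap.id_apply, ContinuousLinearMap.smulRight_apply,
    _root_.sum_apply, ContinuousLinearMap.proj_apply, Pi.sub_apply, Pi.mul_apply,
    Pi.add_apply, Pi.smul_apply, smul_eq_mul, mul_comm]
  ring

theorem differentiable_softmax [Nonempty ι] : Differentiable ℝ (softmax : (ι → ℝ) → ι → ℝ) := by
  unfold softmax
  exact (Differentiable.inv (by fun_prop) fun z => (sum_exp_pos z).ne').smul (by fun_prop)

theorem fderiv_softmax_apply [Nonempty ι] (z w : ι → ℝ) :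
    fderiv ℝ softmax z w = softmaxJacobian (softmax z) w := by
  have hE : HasFDerivAt (fun y : ι → ℝ => fun k => Real.exp (y k))
      (ContinuousLinearMap.pi fun k => Real.exp (z k) • ContinuousLinearMap.proj k) z :=
    hasFDerivAt_pi.2 fun k => (hasFDerivAt_apply k z).exp
  have hS := HasFDerivAt.fun_sum (u := Finset.univ) fun k _ => (hasFDerivAt_apply k z).exp
  have h : HasFDerivAt softmax _ z :=
    ((hasDerivAt_inv (sum_exp_pos z).ne').comp_hasFDerivAt z hS).smul hE
  rw [h.fderiv]
  ext k
  simp only [softmaxJacobian, softmax, dotProduct, Function.comp_apply, neg_smul,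
    _root_.add_apply, _root_.smul_apply, ContinuousLinearMap.coe_pi',
    ContinuousLinearMap.proj_apply, ContinuousLinearMap.smulRight_apply,
    _root_.neg_apply, _root_.sum_apply, Pi.add_apply, Pi.smul_apply,
    Pi.neg_apply, Pi.sub_apply, Pi.mul_apply, smul_eq_mul, Finset.mul_sum, Finset.sum_mul]
  field_simp
  ring

variable {κ : Type*} [Fintype κ]

theorem differentiable_softmax_mulVec [Nonempty ι] (A : Matrix ι κ ℝ) :
    Differentiable ℝ fun y => softmax (A *ᵥ y) :=
  differentiable_softmax.fun_comp (f := fun y => A *ᵥ y)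
    (LinearMap.toContinuousLinearMap A.mulVecLin).differentiable

theorem fderiv_softmax_mulVec_apply [Nonempty ι] (A : Matrix ι κ ℝ) (x v : κ → ℝ) :
    fderiv ℝ (fun y => softmax (A *ᵥ y)) x v =
      softmaxJacobian (softmax (A *ᵥ x)) (A *ᵥ v) := by
  let L := LinearMap.toContinuousLinearMap A.mulVecLin
  change fderiv ℝ (fun y => softmax (L y)) x v = _
  rw [fderiv_fun_comp (f := L) x (differentiable_softmax _) L.differentiableAt, L.fderiv]
  exact fderiv_softmax_apply _ _

end Softmax

theorem dotp_eq_dotProduct {n : ℕ} (u v : Fin n → ℝ) : dotp u v = u ⬝ᵥ v := rfl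

/-- ∂²f(x)/∂x_i ∂x_j = 2⟨f,A_i⟩⟨f,A_j⟩ f − ⟨f, A_i ∘ A_j⟩ f − ⟨f,A_i⟩ (f ∘ A_j)
    − ⟨f,A_j⟩ (f ∘ A_i) + A_i ∘ f ∘ A_j. -/
theorem stmt_5 {n d : ℕ} (A : Matrix (Fin n) (Fin d) ℝ) (x : Fin d → ℝ) (i j : Fin d) :
    fderiv ℝ (fun y => fderiv ℝ (softmaxFn A) y (Pi.single j 1)) x (Pi.single i 1) =
      (2 * dotp (softmaxFn A x) (fun k => A k i)
          * dotp (softmaxFn A x) (fun k => A k j)) • softmaxFn A x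
        - (dotp (softmaxFn A x) ((fun k => A k i) * fun k => A k j)) • softmaxFn A x
        - (dotp (softmaxFn A x) (fun k => A k i)) • (softmaxFn A x * fun k => A k j)
        - (dotp (softmaxFn A x) (fun k => A k j)) • (softmaxFn A x * fun k => A k i)
        + (fun k => A k i) * softmaxFn A x * fun k => A k j := by
  rcases isEmpty_or_nonempty (Fin n) with _ | _
  · exact Subsingleton.elim _ _
  have hderiv (y v) : fderiv ℝ (softmaxFn A) y v = softmaxJacobian (softmaxFn A y) (A *ᵥ v) :=
    fderiv_softmax_mulVec_apply A y v
  have hfirst : (fun y => fderiv ℝ (softmaxFn A) y (Pi.single j 1)) =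
      fun y => softmaxJacobian (softmaxFn A y) (A.col j) := by
    simp only [hderiv, mulVec_single_one]
  rw [hfirst, fderiv_fun_comp (f := softmaxFn A) x (differentiable_softmaxJacobian _ _)
    (differentiable_softmax_mulVec A x), ContinuousLinearMap.comp_apply,
    fderiv_softmaxJacobian_apply, hderiv, mulVec_single_one, softmaxJacobian_dotProduct]
  have hcol (m : Fin d) : A.col m = fun k => A k m := rfl
  simp only [hcol, dotp_eq_dotProduct]
  ext k
  simp only [softmaxJacobian, Pi.add_apply, Pi.sub_apply, Pi.mul_apply, Pi.smul_apply, smul_eq_mul]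
  ring
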